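/- arXiv:0805.4370 — 2 statements merged into one kernel-verified Lean document; each statement's English description precedes it below -/
import Mathlib

section
/- For every polynomial φ and every contraction T (an operator of norm at most 1) on a complex Hilbert space, ‖φ(T)‖ ≤ max_{|ζ|≤1} |φ(ζ)| (von Neumann's inequality). -/
open MeasureTheory Filter Topology Metric Polynomial ContinuousLinearMap
open scoped ENNReal NNReal

noncomputable section

/-- `A = φ(T)` in the sense of the von Neumann functional calculus for contractions:
`A` is the operator-norm limit of `pₙ(T)` whenever polynomials `pₙ` converge to `φ`
uniformly on the closed unit disk. -/
def IsCalc {H : Type*} [NormedAddCommGroup H] [NormedSpace ℂ H]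
    (T : H →L[ℂ] H) (φ : ℂ → ℂ) (A : H →L[ℂ] H) : Prop :=
  ∀ p : ℕ → Polynomial ℂ,
    TendstoUniformlyOn (fun n z => (p n).eval z) φ atTop (closedBall 0 1) →
    Tendsto (fun n => Polynomial.aeval T (p n)) atTop (𝓝 A)

/-- membership in the disk algebra `C_A` -/
def MemDiskAlgebra (φ : ℂ → ℂ) : Prop :=
  ContinuousOn φ (closedBall 0 1) ∧ DifferentiableOn ℂ φ (ball 0 1)

/-- `A = ∫ f dE` : `A` is the operator-norm limit of the integrals of simple functions
converging uniformly to `f`. -/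
def IsOpIntegral {X : Type*} [MeasurableSpace X] {H : Type*}
    [NormedAddCommGroup H] [NormedSpace ℂ H]
    (E : Set X → H →L[ℂ] H) (f : X → ℂ) (A : H →L[ℂ] H) : Prop :=
  ∀ s : ℕ → SimpleFunc X ℂ,
    TendstoUniformly (fun n x => s n x) f atTop →
    Tendsto (fun n => ∑ z ∈ (s n).range, z • E ((s n : X → ℂ) ⁻¹' {z})) atTop (𝓝 A)

/-- semi-spectral measure: positive operator valued, normalized,
countably additive in the weak operator topology -/
def IsSemiSpectralMeasure {X : Type*} [MeasurableSpace X] {H : Type*}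
    [NormedAddCommGroup H] [InnerProductSpace ℂ H] [CompleteSpace H]
    (ℰ : Set X → H →L[ℂ] H) : Prop :=
  (∀ Δ : Set X, MeasurableSet Δ → (ℰ Δ).IsPositive) ∧
  ℰ ∅ = 0 ∧
  ℰ Set.univ = 1 ∧
  ∀ Δ : ℕ → Set X, (∀ j, MeasurableSet (Δ j)) → Pairwise (Function.onFun Disjoint Δ) →
    ∀ x y : H, Tendsto (fun N => ∑ j ∈ Finset.range N, (inner ℂ (ℰ (Δ j) x) y : ℂ))
      atTop (𝓝 (inner ℂ (ℰ (⋃ j, Δ j) x) y))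

/-- spectral measure: projection valued, multiplicative, normalized,
countably additive in the strong operator topology -/
def IsSpectralMeasure {X : Type*} [MeasurableSpace X] {K : Type*}
    [NormedAddCommGroup K] [InnerProductSpace ℂ K] [CompleteSpace K]
    (E : Set X → K →L[ℂ] K) : Prop :=
  (∀ Δ : Set X, MeasurableSet Δ → IsSelfAdjoint (E Δ)) ∧
  (∀ Δ₁ Δ₂ : Set X, MeasurableSet Δ₁ → MeasurableSet Δ₂ →
    E (Δ₁ ∩ Δ₂) = E Δ₁ ∘L E Δ₂) ∧
  E ∅ = 0 ∧
  E Set.univ = 1 ∧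
  ∀ Δ : ℕ → Set X, (∀ j, MeasurableSet (Δ j)) → Pairwise (Function.onFun Disjoint Δ) →
    ∀ x : K, Tendsto (fun N => ∑ j ∈ Finset.range N, E (Δ j) x)
      atTop (𝓝 (E (⋃ j, Δ j) x))

/-- square of the Hilbert–Schmidt norm of `Q`, computed with the Hilbert basis `e` -/
def hsNorm2 {ι : Type*} {H₁ H₂ : Type*}
    [NormedAddCommGroup H₁] [InnerProductSpace ℂ H₁]
    [NormedAddCommGroup H₂] [InnerProductSpace ℂ H₂] [CompleteSpace H₂]
    (e : HilbertBasis ι ℂ H₂) (Q : H₂ →L[ℂ] H₁) : ℝ≥0∞ :=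
  ∑' i, (‖Q (e i)‖₊ : ℝ≥0∞) ^ 2

/-- Hilbert–Schmidt inner product of `Q` and `R`, computed with the Hilbert basis `e` -/
def hsInner {ι : Type*} {H₁ H₂ : Type*}
    [NormedAddCommGroup H₁] [InnerProductSpace ℂ H₁]
    [NormedAddCommGroup H₂] [InnerProductSpace ℂ H₂] [CompleteSpace H₂]
    (e : HilbertBasis ι ℂ H₂) (Q R : H₂ →L[ℂ] H₁) : ℂ :=
  ∑' i, (inner ℂ (Q (e i)) (R (e i)) : ℂ)

/-- `F` is a semi-spectral measure on the product σ-algebra, acting on the Hilbert space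
`S₂(H₂,H₁)` of Hilbert–Schmidt operators, which extends
`F(Δ₁×Δ₂)Q = ℰ₁(Δ₁) Q ℰ₂(Δ₂)`. -/
def IsProductSSM {ι X₁ X₂ : Type*} [MeasurableSpace X₁] [MeasurableSpace X₂]
    {H₁ H₂ : Type*}
    [NormedAddCommGroup H₁] [InnerProductSpace ℂ H₁] [CompleteSpace H₁]
    [NormedAddCommGroup H₂] [InnerProductSpace ℂ H₂] [CompleteSpace H₂]
    (e : HilbertBasis ι ℂ H₂)
    (ℰ₁ : Set X₁ → H₁ →L[ℂ] H₁) (ℰ₂ : Set X₂ → H₂ →L[ℂ] H₂)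
    (F : Set (X₁ × X₂) → (H₂ →L[ℂ] H₁) → (H₂ →L[ℂ] H₁)) : Prop :=
  (∀ Ω, MeasurableSet Ω → IsLinearMap ℂ (F Ω)) ∧
  -- boundedness on S₂ (indeed `0 ≤ F(Ω) ≤ I`)
  (∀ Ω, MeasurableSet Ω → ∀ Q, hsNorm2 e Q ≠ ⊤ → hsNorm2 e (F Ω Q) ≤ hsNorm2 e Q) ∧
  -- value on measurable rectangles
  (∀ Δ₁ Δ₂, MeasurableSet Δ₁ → MeasurableSet Δ₂ → ∀ Q : H₂ →L[ℂ] H₁, hsNorm2 e Q ≠ ⊤ →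
    F (Δ₁ ×ˢ Δ₂) Q = ℰ₁ Δ₁ ∘L Q ∘L ℰ₂ Δ₂) ∧
  -- positivity
  (∀ Ω, MeasurableSet Ω → ∀ Q, hsNorm2 e Q ≠ ⊤ →
    0 ≤ (hsInner e (F Ω Q) Q).re ∧ (hsInner e (F Ω Q) Q).im = 0) ∧
  (∀ Q, F ∅ Q = 0) ∧
  (∀ Q, hsNorm2 e Q ≠ ⊤ → F Set.univ Q = Q) ∧
  -- weak countable additivity
  (∀ Ω : ℕ → Set (X₁ × X₂), (∀ j, MeasurableSet (Ω j)) →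
    Pairwise (Function.onFun Disjoint Ω) →
    ∀ Q R : H₂ →L[ℂ] H₁, hsNorm2 e Q ≠ ⊤ → hsNorm2 e R ≠ ⊤ →
      Tendsto (fun N => ∑ j ∈ Finset.range N, hsInner e (F (Ω j) Q) R) atTop
        (𝓝 (hsInner e (F (⋃ j, Ω j) Q) R)))

/-- `A = ∬ Φ dℰ₁ Q dℰ₂`, the double operator integral with respect to semi-spectral
measures of a Hilbert–Schmidt operator `Q`: `A` is obtained by applying to `Q` the
integral of `Φ` against a product semi-spectral measure `F` on `S₂(H₂,H₁)`, the integral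
being the `S₂`-limit of integrals of uniformly approximating simple functions. -/
def IsDOI {ι X₁ X₂ : Type*} [MeasurableSpace X₁] [MeasurableSpace X₂]
    {H₁ H₂ : Type*}
    [NormedAddCommGroup H₁] [InnerProductSpace ℂ H₁] [CompleteSpace H₁]
    [NormedAddCommGroup H₂] [InnerProductSpace ℂ H₂] [CompleteSpace H₂]
    (e : HilbertBasis ι ℂ H₂)
    (ℰ₁ : Set X₁ → H₁ →L[ℂ] H₁) (ℰ₂ : Set X₂ → H₂ →L[ℂ] H₂)
    (Φ : X₁ × X₂ → ℂ) (Q A : H₂ →L[ℂ] H₁) : Prop :=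
  ∃ F, IsProductSSM e ℰ₁ ℰ₂ F ∧
    ∀ s : ℕ → SimpleFunc (X₁ × X₂) ℂ,
      TendstoUniformly (fun n p => s n p) Φ atTop →
      Tendsto
        (fun n => hsNorm2 e
          ((∑ z ∈ (s n).range, z • F ((s n : X₁ × X₂ → ℂ) ⁻¹' {z}) Q) - A))
        atTop (𝓝 0)

/-- `ℰ` is a semi-spectral measure of the contraction `T` on the unit circle:
`Tⁿ = ∫ ζⁿ dℰ(ζ)` for all `n ≥ 0`. -/
def IsSemiSpectralMeasureOf {H : Type*}
    [NormedAddCommGroup H] [InnerProductSpace ℂ H] [CompleteSpace H]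
    (T : H →L[ℂ] H) (ℰ : Set (sphere (0:ℂ) 1) → H →L[ℂ] H) : Prop :=
  IsSemiSpectralMeasure ℰ ∧ ∀ n : ℕ, IsOpIntegral ℰ (fun ζ => (ζ : ℂ) ^ n) (T ^ n)

/-- alternating chain `A 0 ∘ Q 0 ∘ A 1 ∘ Q 1 ∘ ⋯ ∘ Q (n-1) ∘ A n` for a family of
Hilbert spaces -/
def opChainF (H : ℕ → Type*) [∀ k, NormedAddCommGroup (H k)] [∀ k, NormedSpace ℂ (H k)]
    (A : ∀ k, H k →L[ℂ] H k) (Q : ∀ k, H (k + 1) →L[ℂ] H k) : ∀ n, H n →L[ℂ] H 0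
  | 0 => A 0
  | n + 1 => opChainF H A Q n ∘L Q n ∘L A (n + 1)

/-- alternating chain `A 0 ∘ Q ∘ A 1 ∘ Q ∘ ⋯ ∘ Q ∘ A n` on a single space -/
def opChainC {H : Type*} [NormedAddCommGroup H] [NormedSpace ℂ H]
    (A : ℕ → H →L[ℂ] H) (Q : H →L[ℂ] H) : ℕ → H →L[ℂ] H
  | 0 => A 0
  | n + 1 => opChainC A Q n ∘L Q ∘L A (n + 1)

/-- divided difference of order `n` of `φ`, evaluated at `l 0, …, l n` -/
def divDiff (φ : ℂ → ℂ) : ℕ → (ℕ → ℂ) → ℂ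
  | 0, l => φ (l 0)
  | n + 1, l =>
      (divDiff φ n l - divDiff φ n (fun k => if k = n then l (n + 1) else l k)) /
        (l n - l (n + 1))

/-!
For a strict contraction `T` and `|z| = 1`, the operator Poisson kernel
`K_z = (1 - zT)⁻¹ + ((1 - zT)⁻¹)* - 1` is positive: with `u = (1 - zT)⁻¹ x` and
`v = (1 - zT)⁻¹ y` one has `⟪x, K_z y⟫ = ⟪u, v⟫ - ⟪Tu, Tv⟫`. Expanding `(1 - zT)⁻¹` as a geometric
series shows that the `k`-th Fourier coefficient of `z ↦ ⟪x, K_z y⟫` is `⟪x, Tᵏ y⟫` for `k ≥ 0`,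
so `⟪x, φ(T) y⟫` is the average over the unit circle of `φ(z⁻¹) ⟪x, K_z y⟫`. Bounding `|φ|` by `M`
and the positive form `⟪x, K_z y⟫` by the mean of its diagonal values, whose averages are `‖x‖²`
and `‖y‖²`, gives `‖φ(T)‖ ≤ M`. A contraction `T` is the limit of the strict contractions `rT` as
`r → 1⁻`.
-/

open Real
open scoped InnerProductSpace

theorem Real.circleAverage_zpow_zero_one (n : ℤ) :
    circleAverage (fun z : ℂ => z ^ n) 0 1 = if n = 0 then 1 else 0 := by
  rw [circleAverage_eq_circleIntegral one_ne_zero]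
  split_ifs with hn
  · subst hn
    simp only [zpow_zero, smul_eq_mul, mul_one]
    rw [circleIntegral.integral_sub_inv_of_mem_ball (by simp)]
    field_simp
  · have : Set.EqOn (fun z : ℂ => (z - 0)⁻¹ • z ^ n) (fun z => (z - 0) ^ (n - 1)) (sphere 0 1) := by
      intro z hz
      have hz0 : z ≠ 0 := ne_zero_of_mem_sphere one_ne_zero ⟨z, hz⟩
      simp [zpow_sub₀ hz0, div_eq_inv_mul]
    rw [circleIntegral.integral_congr zero_le_one this,
      circleIntegral.integral_sub_zpow_of_ne (by omega), smul_zero]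

theorem Real.circleAverage_zpow_neg_mul_of_hasSum {c : ℤ → ℂ} (hc : Summable fun n => ‖c n‖)
    {f : ℂ → ℂ} (hf : ∀ z ∈ sphere (0 : ℂ) 1, HasSum (fun n => c n * z ^ n) (f z)) (k : ℤ) :
    circleAverage (fun z => z ^ (-k) * f z) 0 1 = c k := by
  have hterm (n : ℤ) :
      circleAverage (fun z => z ^ (-k) * (c n * z ^ n)) 0 1 = if n = k then c k else 0 := by
    have : Set.EqOn (fun z : ℂ => z ^ (-k) * (c n * z ^ n)) (fun z => c n • z ^ (n - k))
        (sphere 0 |1|) := by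
      intro z hz
      have hz0 : z ≠ 0 := ne_zero_of_mem_sphere (by simp) ⟨z, hz⟩
      simp only [smul_eq_mul, zpow_sub₀ hz0, zpow_neg, div_eq_mul_inv]
      ring
    rw [circleAverage_congr_sphere this, circleAverage_fun_smul, circleAverage_zpow_zero_one]
    by_cases h : n = k <;> simp [h, sub_eq_zero]
  have hsum : HasSum (fun n => circleAverage (fun z => z ^ (-k) * (c n * z ^ n)) 0 1)
      (circleAverage (fun z => z ^ (-k) * f z) 0 1) := by
    have hne (θ : ℝ) : circleMap 0 1 θ ≠ 0 := circleMap_ne_center one_ne_zero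
    simp only [circleAverage_def]
    refine .const_smul _ (intervalIntegral.hasSum_integral_of_dominated_convergence
      (fun n _ => ‖c n‖) (fun n => ?_) (fun n => .of_forall fun θ _ => ?_)
      (.of_forall fun _ _ => hc) intervalIntegrable_const (.of_forall fun θ _ => ?_))
    · exact Continuous.aestronglyMeasurable (by fun_prop (disch := simp [hne]))
    · simp [norm_circleMap_zero]
    · exact (hf _ (circleMap_mem_sphere 0 zero_le_one θ)).mul_left _
  rw [funext hterm] at hsum
  exact hsum.unique (hasSum_ite_eq k (c k))

theorem Real.norm_circleAverage_le {E : Type*} [NormedAddCommGroup E] [NormedSpace ℝ E]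
    (f : ℂ → E) (c : ℂ) (R : ℝ) :
    ‖circleAverage f c R‖ ≤ circleAverage (fun z => ‖f z‖) c R := by
  simp only [circleAverage_def, norm_smul, smul_eq_mul,
    Real.norm_of_nonneg (by positivity : 0 ≤ (2 * π)⁻¹)]
  gcongr
  exact intervalIntegral.norm_integral_le_integral_norm (by positivity)

theorem ContinuousLinearMap.opNorm_le_of_norm_inner_le {𝕜 E : Type*} [RCLike 𝕜]
    [NormedAddCommGroup E] [InnerProductSpace 𝕜 E] (A : E →L[𝕜] E) {M : ℝ} (hM : 0 ≤ M)
    (h : ∀ x y, ‖⟪x, A y⟫_𝕜‖ ≤ M * ((‖x‖ ^ 2 + ‖y‖ ^ 2) / 2)) : ‖A‖ ≤ M := by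
  refine A.opNorm_le_bound hM fun y => ?_
  rcases eq_or_ne (A y) 0 with hAy | hAy
  · simp [hAy, mul_nonneg hM (norm_nonneg y)]
  have hy : 0 < ‖y‖ := norm_pos_iff.2 fun hy => hAy (by simp [hy])
  have hAy' : 0 < ‖A y‖ := norm_pos_iff.2 hAy
  -- test `A y` against its rescaling to norm `‖y‖`
  have key := h (((‖y‖ / ‖A y‖ : ℝ) : 𝕜) • A y) y
  rw [inner_smul_left, inner_self_eq_norm_sq_to_K, norm_smul, norm_mul, RCLike.conj_ofReal,
    RCLike.norm_ofReal, abs_of_pos (by positivity), div_mul_cancel₀ _ hAy'.ne'] at key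
  have : ‖y‖ * ‖A y‖ ≤ M * ‖y‖ * ‖y‖ := by
    convert key using 1
    · simp only [norm_pow, RCLike.norm_ofReal, abs_norm]
      field_simp
    · ring
  nlinarith

theorem norm_inner_sub_inner_map_le {𝕜 E F : Type*} [RCLike 𝕜]
    [NormedAddCommGroup E] [InnerProductSpace 𝕜 E] [NormedAddCommGroup F] [InnerProductSpace 𝕜 F]
    (T : E →L[𝕜] F) (hT : ‖T‖ ≤ 1) (u v : E) :
    ‖⟪u, v⟫_𝕜 - ⟪T u, T v⟫_𝕜‖ ≤ ((‖u‖ ^ 2 - ‖T u‖ ^ 2) + (‖v‖ ^ 2 - ‖T v‖ ^ 2)) / 2 := by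
  set q : 𝕜 := ⟪u, v⟫_𝕜 - ⟪T u, T v⟫_𝕜
  -- a phase `a` turning the cross term of `‖a • u - v‖² - ‖T (a • u - v)‖² ≥ 0` into `‖q‖`
  obtain ⟨a, ha, haq⟩ : ∃ a : 𝕜, ‖a‖ = 1 ∧ starRingEnd 𝕜 a * q = ‖q‖ := by
    rcases eq_or_ne q 0 with hq | hq
    · exact ⟨1, by simp, by simp [hq]⟩
    refine ⟨q / ‖q‖, by simp [norm_div, hq], ?_⟩
    rw [map_div₀, RCLike.conj_ofReal, div_mul_eq_mul_div, RCLike.conj_mul]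
    field_simp
  have hpos : 0 ≤ ‖a • u - v‖ ^ 2 - ‖T (a • u - v)‖ ^ 2 := by
    have := (T.le_opNorm (a • u - v)).trans (mul_le_of_le_one_left (norm_nonneg _) hT)
    nlinarith [norm_nonneg (T (a • u - v))]
  have hre : RCLike.re (starRingEnd 𝕜 a * ⟪u, v⟫_𝕜) -
      RCLike.re (starRingEnd 𝕜 a * ⟪T u, T v⟫_𝕜) = ‖q‖ := by
    rw [← map_sub, ← mul_sub, haq, RCLike.ofReal_re]
  rw [map_sub, map_smul, @norm_sub_sq 𝕜, @norm_sub_sq 𝕜, inner_smul_left, inner_smul_left,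
    norm_smul, norm_smul, ha, one_mul, one_mul] at hpos
  linarith

section PoissonKernel

variable {H : Type*} [NormedAddCommGroup H] [InnerProductSpace ℂ H] (T : H →L[ℂ] H)

/-- `⟪x, K_z y⟫` for the operator Poisson kernel `K_z = (1 - zT)⁻¹ + ((1 - zT)⁻¹)* - 1`, the real
part of `(1 + zT)(1 - zT)⁻¹`. -/
def poissonForm (z : ℂ) (x y : H) : ℂ :=
  ⟪x, Ring.inverse (1 - z • T) y⟫_ℂ + ⟪Ring.inverse (1 - z • T) x, y⟫_ℂ - ⟪x, y⟫_ℂ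

/-- The Fourier coefficients of `z ↦ poissonForm T z x y` on the unit circle. -/
def poissonCoeff (x y : H) : ℤ → ℂ
  | .ofNat n => ⟪x, (T ^ n) y⟫_ℂ
  | .negSucc n => ⟪(T ^ (n + 1)) x, y⟫_ℂ

theorem summable_norm_poissonCoeff (hT : ‖T‖ < 1) (x y : H) :
    Summable fun n => ‖poissonCoeff T x y n‖ := by
  have hg := summable_norm_geometric_of_norm_lt_one hT
  have bound (m : ℕ) (u v : H) : ‖⟪u, (T ^ m) v⟫_ℂ‖ ≤ ‖u‖ * ‖v‖ * ‖T ^ m‖ :=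
    calc ‖⟪u, (T ^ m) v⟫_ℂ‖ ≤ ‖u‖ * (‖T ^ m‖ * ‖v‖) :=
          (norm_inner_le_norm _ _).trans (by gcongr; exact (T ^ m).le_opNorm v)
      _ = ‖u‖ * ‖v‖ * ‖T ^ m‖ := by ring
  convert Summable.int_rec (f := fun m => ‖⟪x, (T ^ m) y⟫_ℂ‖)
    (g := fun m => ‖⟪(T ^ (m + 1)) x, y⟫_ℂ‖) ?_ ?_ using 1
  · funext n; cases n <;> rfl
  · exact .of_nonneg_of_le (fun _ => norm_nonneg _) (fun m => bound m x y) (hg.mul_left _)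
  · refine .of_nonneg_of_le (fun _ => norm_nonneg _) (fun m => ?_)
      (((summable_nat_add_iff 1).2 hg).mul_left (‖y‖ * ‖x‖))
    rw [norm_inner_symm]
    exact bound (m + 1) y x

variable [CompleteSpace H]

theorem hasSum_inner_inverse_one_sub_smul {z : ℂ} (h : ‖z • T‖ < 1) (x y : H) :
    HasSum (fun m : ℕ => z ^ m * ⟪x, (T ^ m) y⟫_ℂ) ⟪x, Ring.inverse (1 - z • T) y⟫_ℂ := by
  have := (hasSum_geom_series_inverse (z • T) h).mapL
    ((innerSL ℂ x).comp (ContinuousLinearMap.apply ℂ H y))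
  simpa only [ContinuousLinearMap.comp_apply, ContinuousLinearMap.apply_apply, innerSL_apply_apply,
    _root_.smul_pow, smul_apply, inner_smul_right] using this

theorem hasSum_poissonForm (hT : ‖T‖ < 1) {z : ℂ} (hz : ‖z‖ = 1) (x y : H) :
    HasSum (fun n : ℤ => poissonCoeff T x y n * z ^ n) (poissonForm T z x y) := by
  have h : ‖z • T‖ < 1 := by rwa [norm_smul, hz, one_mul]
  have h₂ : HasSum (fun m : ℕ => starRingEnd ℂ z ^ m * ⟪(T ^ m) x, y⟫_ℂ)
      ⟪Ring.inverse (1 - z • T) x, y⟫_ℂ := by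
    simpa only [Function.comp_def, map_mul, map_pow, inner_conj_symm] using
      (hasSum_inner_inverse_one_sub_smul T h y x).map (starRingEnd ℂ) Complex.continuous_conj
  convert (hasSum_inner_inverse_one_sub_smul T h x y).int_rec ((hasSum_nat_add_iff' 1).mpr h₂)
    using 1
  · funext n
    cases n <;> simp [poissonCoeff, zpow_negSucc, ← Complex.inv_eq_conj hz, mul_comm]
  · simp only [poissonForm, Finset.sum_range_one, pow_zero, one_mul, one_apply_eq_self]
    ring

theorem inverse_one_sub_smul_apply_sub {z : ℂ} (h : ‖z • T‖ < 1) (w : H) :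
    Ring.inverse (1 - z • T) w - z • T (Ring.inverse (1 - z • T) w) = w := by
  simpa using congr($(Ring.mul_inverse_cancel _ (isUnit_one_sub_of_norm_lt_one h)) w)

theorem poissonForm_eq (hT : ‖T‖ < 1) {z : ℂ} (hz : ‖z‖ = 1) (x y : H) :
    poissonForm T z x y = ⟪Ring.inverse (1 - z • T) x, Ring.inverse (1 - z • T) y⟫_ℂ
      - ⟪T (Ring.inverse (1 - z • T) x), T (Ring.inverse (1 - z • T) y)⟫_ℂ := by
  have h : ‖z • T‖ < 1 := by rwa [norm_smul, hz, one_mul]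
  have hzz : starRingEnd ℂ z * z = 1 := by simp [Complex.conj_mul', hz]
  have hx := inverse_one_sub_smul_apply_sub T h x
  have hy := inverse_one_sub_smul_apply_sub T h y
  rw [poissonForm]
  set u := Ring.inverse (1 - z • T) x
  set v := Ring.inverse (1 - z • T) y
  clear_value u v
  subst hx hy
  simp only [inner_sub_left, inner_sub_right, inner_smul_left, inner_smul_right]
  linear_combination -⟪T u, T v⟫_ℂ * hzz

theorem norm_poissonForm_le (hT : ‖T‖ < 1) {z : ℂ} (hz : ‖z‖ = 1) (x y : H) :
    ‖poissonForm T z x y‖ ≤ ((poissonForm T z x x).re + (poissonForm T z y y).re) / 2 := by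
  simp only [poissonForm_eq T hT hz, ← RCLike.re_to_complex, map_sub, inner_self_eq_norm_sq]
  exact norm_inner_sub_inner_map_le T hT.le _ _

theorem continuousOn_poissonForm (hT : ‖T‖ < 1) (x y : H) :
    ContinuousOn (fun z => poissonForm T z x y) (sphere 0 1) := by
  have hR : ContinuousOn (fun z : ℂ => Ring.inverse (1 - z • T)) (sphere 0 1) := fun z hz => by
    have h : ‖z • T‖ < 1 := by rwa [norm_smul, mem_sphere_zero_iff_norm.1 hz, one_mul]
    have := NormedRing.inverse_continuousAt (Units.oneSub (z • T) h)
    rw [Units.val_oneSub] at this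
    exact (this.comp (f := fun w : ℂ => 1 - w • T) (by fun_prop)).continuousWithinAt
  unfold poissonForm
  fun_prop

theorem circleAverage_zpow_neg_mul_poissonForm (hT : ‖T‖ < 1) (k : ℕ) (x y : H) :
    circleAverage (fun z => z ^ (-(k : ℤ)) * poissonForm T z x y) 0 1 = ⟪x, (T ^ k) y⟫_ℂ :=
  circleAverage_zpow_neg_mul_of_hasSum (summable_norm_poissonCoeff T hT x y)
    (fun _ hz => hasSum_poissonForm T hT (mem_sphere_zero_iff_norm.1 hz) x y) k

theorem inner_aeval_eq_circleAverage (hT : ‖T‖ < 1) (φ : ℂ[X]) (x y : H) :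
    ⟪x, aeval T φ y⟫_ℂ = circleAverage (fun z => φ.eval z⁻¹ * poissonForm T z x y) 0 1 := by
  have hint (i : ℕ) :
      CircleIntegrable (fun z => φ.coeff i • (z ^ (-(i : ℤ)) * poissonForm T z x y)) 0 1 := by
    refine ContinuousOn.circleIntegrable zero_le_one ?_
    have := continuousOn_poissonForm T hT x y
    have hz : ContinuousOn (fun z : ℂ => z ^ (-(i : ℤ))) (sphere 0 1) :=
      continuousOn_id.zpow₀ _ fun z hz => Or.inl (ne_zero_of_mem_sphere one_ne_zero ⟨z, hz⟩)
    fun_prop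
  calc ⟪x, aeval T φ y⟫_ℂ
      = ∑ i ∈ Finset.range (φ.natDegree + 1), φ.coeff i • ⟪x, (T ^ i) y⟫_ℂ := by
        simp [aeval_eq_sum_range]
    _ = ∑ i ∈ Finset.range (φ.natDegree + 1),
          circleAverage (fun z => φ.coeff i • (z ^ (-(i : ℤ)) * poissonForm T z x y)) 0 1 := by
        simp only [circleAverage_fun_smul, circleAverage_zpow_neg_mul_poissonForm T hT]
    _ = circleAverage (fun z => φ.eval z⁻¹ * poissonForm T z x y) 0 1 := by
        rw [← circleAverage_fun_sum fun i _ => hint i]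
        congr 1
        funext z
        simp [eval_eq_sum_range, Finset.sum_mul, zpow_neg, mul_assoc]

theorem norm_aeval_le_of_norm_lt_one (hT : ‖T‖ < 1) {φ : ℂ[X]} {M : ℝ}
    (hM : ∀ z : ℂ, ‖z‖ = 1 → ‖φ.eval z‖ ≤ M) : ‖aeval T φ‖ ≤ M := by
  have hM0 : 0 ≤ M := (norm_nonneg _).trans (hM 1 norm_one)
  have hPre (x : H) : CircleIntegrable (fun z => (poissonForm T z x x).re) 0 1 :=
    (Complex.continuous_re.comp_continuousOn (continuousOn_poissonForm T hT x x)).circleIntegrable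
      zero_le_one
  have hmean (x : H) : circleAverage (fun z => (poissonForm T z x x).re) 0 1 = ‖x‖ ^ 2 := by
    have h := circleAverage_zpow_neg_mul_poissonForm T hT 0 x x
    simp only [Nat.cast_zero, neg_zero, zpow_zero, one_mul, pow_zero, one_apply_eq_self] at h
    have hre := Complex.reCLM.circleAverage_comp_comm
      ((continuousOn_poissonForm T hT x x).circleIntegrable zero_le_one)
    simp only [Function.comp_def, Complex.reCLM_apply] at hre
    rw [hre, h, ← RCLike.re_to_complex, inner_self_eq_norm_sq]
  refine (aeval T φ).opNorm_le_of_norm_inner_le hM0 fun x y => ?_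
  rw [inner_aeval_eq_circleAverage T hT]
  calc _ ≤ circleAverage (fun z => ‖φ.eval z⁻¹ * poissonForm T z x y‖) 0 1 :=
        norm_circleAverage_le _ _ _
    _ ≤ circleAverage (fun z => (M / 2) • ((poissonForm T z x x).re + (poissonForm T z y y).re))
          0 1 := by
        refine circleAverage_mono ?_ ((hPre x).add (hPre y)).const_smul fun z hz => ?_
        · have hinv : ContinuousOn (fun z : ℂ => z⁻¹) (sphere 0 1) :=
            continuousOn_inv₀.mono fun z hz => ne_zero_of_mem_sphere one_ne_zero ⟨z, hz⟩
          have := continuousOn_poissonForm T hT x y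
          exact ContinuousOn.circleIntegrable zero_le_one (by fun_prop)
        · have hz : ‖z‖ = 1 := by simpa using hz
          calc ‖φ.eval z⁻¹ * poissonForm T z x y‖
              ≤ M * (((poissonForm T z x x).re + (poissonForm T z y y).re) / 2) := by
                rw [norm_mul]
                exact mul_le_mul (hM _ (by simp [hz])) (norm_poissonForm_le T hT hz x y)
                  (norm_nonneg _) hM0
            _ = _ := by rw [smul_eq_mul]; ring
    _ = M * ((‖x‖ ^ 2 + ‖y‖ ^ 2) / 2) := by
        rw [circleAverage_fun_smul, circleAverage_fun_add (hPre x) (hPre y), hmean, hmean,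
          smul_eq_mul]
        ring

end PoissonKernel

theorem norm_aeval_le_of_norm_le_one {H : Type*} [NormedAddCommGroup H] [InnerProductSpace ℂ H]
    [CompleteSpace H] {T : H →L[ℂ] H} (hT : ‖T‖ ≤ 1) {φ : ℂ[X]} {M : ℝ}
    (hM : ∀ z : ℂ, ‖z‖ = 1 → ‖φ.eval z‖ ≤ M) : ‖aeval T φ‖ ≤ M := by
  have hlim : Tendsto (fun r : ℝ => ‖aeval ((r : ℂ) • T) φ‖) (𝓝[<] 1) (𝓝 ‖aeval T φ‖) := by
    have hc : Continuous fun r : ℝ => (r : ℂ) • T := by fun_prop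
    have := (φ.continuous_aeval.comp hc).norm.tendsto 1
    simp only [Function.comp_def, Complex.ofReal_one, one_smul] at this
    exact this.mono_left nhdsWithin_le_nhds
  refine le_of_tendsto hlim ?_
  filter_upwards [Ioo_mem_nhdsLT zero_lt_one] with r hr
  refine norm_aeval_le_of_norm_lt_one _ ?_ hM
  rw [norm_smul, Complex.norm_real, Real.norm_of_nonneg hr.1.le]
  calc r * ‖T‖ ≤ r * 1 := mul_le_mul_of_nonneg_left hT hr.1.le
    _ < 1 := by linarith [hr.2]

/-- von Neumann's inequality. For every polynomial `φ` and every
contraction `T` on a complex Hilbert space, `‖φ(T)‖ ≤ max_{|ζ|≤1} |φ(ζ)|`. -/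
theorem statement0 {H : Type*} [NormedAddCommGroup H] [InnerProductSpace ℂ H]
    [CompleteSpace H]
    (T : H →L[ℂ] H) (hT : ‖T‖ ≤ 1) (φ : Polynomial ℂ) :
    ‖Polynomial.aeval T φ‖ ≤ ⨆ ζ : closedBall (0 : ℂ) 1, ‖φ.eval (ζ : ℂ)‖ := by
  refine norm_aeval_le_of_norm_le_one hT fun z hz => ?_
  have : CompactSpace (closedBall (0 : ℂ) 1) :=
    isCompact_iff_compactSpace.1 (isCompact_closedBall 0 1)
  have hbdd : BddAbove (Set.range fun ζ : closedBall (0 : ℂ) 1 => ‖φ.eval (ζ : ℂ)‖) :=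
    (isCompact_range (by fun_prop)).bddAbove
  exact le_ciSup hbdd ⟨z, by simp [hz]⟩
end
end

section
/- Let ℰ₁, ℰ₂ be semi-spectral measures on (X₁,B₁), (X₂,B₂) and Q a Hilbert–Schmidt operator from H₂ to H₁. Then the double operator integral ∬ Φ(x₁,x₂) dℰ₁(x₁) Q dℰ₂(x₂) satisfies ‖∬ Φ dℰ₁ Q dℰ₂‖_{S₂} ≤ sup_{x₁,x₂} |Φ(x₁,x₂)| · ‖Q‖_{S₂} for every bounded measurable function Φ on X₁ × X₂. -/
open MeasureTheory Filter Topology Metric Polynomial ContinuousLinearMap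
open scoped ENNReal NNReal

noncomputable section

/-! On the Hilbert–Schmidt class, viewed inside `ℓ²(ι, H₁)` through `Q ↦ (Q eᵢ)ᵢ`, every `F Ω`
is a positive operator, and for a simple function `s` the operators `F (s⁻¹' {z})` form a finite
positive partition of unity (finite additivity comes from the weak countable additivity).
For positive `Tₐ` with `∑ Tₐ = 1` and `‖cₐ‖ ≤ B`, the Cauchy–Schwarz inequality for each
semi-inner product `⟪Tₐ x, y⟫` followed by the one for finite sums gives
`‖⟪∑ cₐ Tₐ x, y⟫‖ ≤ B ∑ ⟪Tₐ x, x⟫^½ ⟪Tₐ y, y⟫^½ ≤ B ‖x‖ ‖y‖`, hence `‖∑ cₐ Tₐ x‖ ≤ B ‖x‖`.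
Approximating `Φ` uniformly by simple functions (rounding to a grid) and passing to the
`S₂`-limit gives the bound with `B = sup ‖Φ‖`. -/

open scoped InnerProductSpace
open RCLike Bornology

namespace LinearMap

variable {𝕜 E : Type*} [RCLike 𝕜] [NormedAddCommGroup E] [InnerProductSpace 𝕜 E]

theorem IsPositive.norm_inner_sq_le {T : E →ₗ[𝕜] E} (hT : T.IsPositive) (x y : E) :
    ‖⟪T x, y⟫_𝕜‖ ^ 2 ≤ re ⟪T x, x⟫_𝕜 * re ⟪T y, y⟫_𝕜 := by
  let c : PreInnerProductSpace.Core 𝕜 E :=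
    { inner := fun x y => ⟪T x, y⟫_𝕜
      conj_inner_symm := fun x y => by
        simp only [inner_conj_symm]; exact hT.isSymmetric x y |>.symm
      re_inner_nonneg := hT.re_inner_nonneg_left
      add_left := fun x y z => by simp only [map_add, inner_add_left]
      smul_left := fun x y r => by simp only [map_smul, inner_smul_left] }
  have h := InnerProductSpace.Core.inner_mul_inner_self_le (c := c) x y
  change ‖⟪T x, y⟫_𝕜‖ * ‖⟪T y, x⟫_𝕜‖ ≤ re ⟪T x, x⟫_𝕜 * re ⟪T y, y⟫_𝕜 at h
  rwa [hT.isSymmetric y x, norm_inner_symm y (T x), ← sq] at h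

theorem norm_sum_smul_apply_le_of_isPositive {α : Type*} {t : Finset α} {T : α → E →ₗ[𝕜] E}
    (hT : ∀ a, (T a).IsPositive) (hsum : ∑ a ∈ t, T a = 1) {c : α → 𝕜} {B : ℝ} (hB : 0 ≤ B)
    (hc : ∀ a ∈ t, ‖c a‖ ≤ B) (x : E) :
    ‖∑ a ∈ t, c a • T a x‖ ≤ B * ‖x‖ := by
  have hdiag (y : E) : ∑ a ∈ t, re ⟪T a y, y⟫_𝕜 = ‖y‖ ^ 2 := by
    rw [← map_sum, ← sum_inner, ← LinearMap.sum_apply, hsum, Module.End.one_apply,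
      ← inner_self_eq_norm_sq (𝕜 := 𝕜)]
  have hform (y : E) : ‖⟪∑ a ∈ t, c a • T a x, y⟫_𝕜‖ ≤ B * (‖x‖ * ‖y‖) := calc
    ‖⟪∑ a ∈ t, c a • T a x, y⟫_𝕜‖ ≤ ∑ a ∈ t, ‖c a‖ * ‖⟪T a x, y⟫_𝕜‖ := by
      simp only [sum_inner, inner_smul_left]
      refine (norm_sum_le _ _).trans_eq (Finset.sum_congr rfl fun a _ => ?_)
      rw [norm_mul, RCLike.norm_conj]
    _ ≤ ∑ a ∈ t, B * (√(re ⟪T a x, x⟫_𝕜) * √(re ⟪T a y, y⟫_𝕜)) := by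
      refine Finset.sum_le_sum fun a ha => mul_le_mul (hc a ha) ?_ (norm_nonneg _) hB
      rw [← Real.sqrt_mul (hT a |>.re_inner_nonneg_left x), ← Real.sqrt_sq (norm_nonneg _)]
      exact Real.sqrt_le_sqrt ((hT a).norm_inner_sq_le x y)
    _ ≤ B * (√(∑ a ∈ t, re ⟪T a x, x⟫_𝕜) * √(∑ a ∈ t, re ⟪T a y, y⟫_𝕜)) := by
      rw [← Finset.mul_sum]
      exact mul_le_mul_of_nonneg_left (Real.sum_sqrt_mul_sqrt_le t
        (fun a => (hT a).re_inner_nonneg_left x) fun a => (hT a).re_inner_nonneg_left y) hB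
    _ = B * (‖x‖ * ‖y‖) := by
      rw [hdiag, hdiag, Real.sqrt_sq (norm_nonneg _), Real.sqrt_sq (norm_nonneg _)]
  set P := ∑ a ∈ t, c a • T a x
  rcases (norm_nonneg P).eq_or_lt with hP | hP
  · rw [← hP]; positivity
  · refine le_of_mul_le_mul_right ?_ hP
    calc ‖P‖ * ‖P‖ = ‖⟪P, P⟫_𝕜‖ := by
          rw [inner_self_eq_norm_sq_to_K, norm_pow, norm_ofReal, abs_norm, sq]
      _ ≤ B * ‖x‖ * ‖P‖ := by rw [mul_assoc]; exact hform P

end LinearMap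

section FiniteAdditivity

variable {X M : Type*} [MeasurableSpace X] [AddCommMonoid M] [TopologicalSpace M] [T2Space M]
  {m : Set X → M}

theorem union_eq_add_of_tendsto_sum (h0 : m ∅ = 0)
    (hm : ∀ Ω : ℕ → Set X, (∀ j, MeasurableSet (Ω j)) → Pairwise (Function.onFun Disjoint Ω) →
      Tendsto (fun N => ∑ j ∈ Finset.range N, m (Ω j)) atTop (𝓝 (m (⋃ j, Ω j))))
    {A B : Set X} (hA : MeasurableSet A) (hB : MeasurableSet B) (hAB : Disjoint A B) :
    m (A ∪ B) = m A + m B := by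
  let Ω : ℕ → Set X := fun j => if j = 0 then A else if j = 1 then B else ∅
  have hΩ : ∀ j, MeasurableSet (Ω j) := fun j => by
    simp only [Ω]; split_ifs <;> first | exact hA | exact hB | exact .empty
  have hdisj : Pairwise (Function.onFun Disjoint Ω) := by
    intro i j hij
    simp only [Function.onFun, Ω]
    split_ifs <;> first | omega | simp [hAB.symm]
  have hunion : (⋃ j, Ω j) = A ∪ B := by
    ext x
    simp only [Set.mem_iUnion, Set.mem_union, Ω]
    constructor
    · rintro ⟨j, hj⟩; split_ifs at hj <;> simp_all
    · rintro (hx | hx)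
      exacts [⟨0, by simpa using hx⟩, ⟨1, by simpa using hx⟩]
  have hpartial : ∀ N ≥ 2, ∑ j ∈ Finset.range N, m (Ω j) = m A + m B := by
    intro N hN
    induction N, hN using Nat.le_induction with
    | base => simp [Finset.sum_range_succ, Ω]
    | succ N hN ih =>
      rw [Finset.sum_range_succ, ih]
      simp [Ω, show N ≠ 0 by omega, show N ≠ 1 by omega, h0]
  rw [← hunion]
  exact tendsto_nhds_unique (hm Ω hΩ hdisj)
    (tendsto_const_nhds.congr' (eventually_atTop.2 ⟨2, fun N hN => (hpartial N hN).symm⟩))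

theorem MeasureTheory.SimpleFunc.sum_range_fiber_eq_univ_of_tendsto_sum {Y : Type*}
    (s : SimpleFunc X Y) (h0 : m ∅ = 0)
    (hm : ∀ Ω : ℕ → Set X, (∀ j, MeasurableSet (Ω j)) → Pairwise (Function.onFun Disjoint Ω) →
      Tendsto (fun N => ∑ j ∈ Finset.range N, m (Ω j)) atTop (𝓝 (m (⋃ j, Ω j)))) :
    ∑ y ∈ s.range, m (s ⁻¹' {y}) = m Set.univ := by
  classical
  suffices ∀ t : Finset Y, ∑ y ∈ t, m (s ⁻¹' {y}) = m (s ⁻¹' t) by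
    rw [this, SimpleFunc.coe_range, Set.preimage_range]
  intro t
  induction t using Finset.induction_on with
  | empty => simp [h0]
  | insert y t hy ih =>
    rw [Finset.sum_insert hy, ih, Finset.coe_insert, Set.insert_eq, Set.preimage_union,
      union_eq_add_of_tendsto_sum h0 hm (s.measurableSet_fiber y) (s.measurableSet_preimage _)]
    exact Set.disjoint_singleton_left.2 (by simpa using hy) |>.preimage _

end FiniteAdditivity

section HilbertSchmidt

variable {ι H₁ H₂ : Type*}
  [NormedAddCommGroup H₁] [InnerProductSpace ℂ H₁]
  [NormedAddCommGroup H₂] [InnerProductSpace ℂ H₂] (e : HilbertBasis ι ℂ H₂)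

variable (H₁) in
def hsSubmodule : Submodule ℂ (H₂ →L[ℂ] H₁) where
  carrier := {Q | Memℓp (fun i => Q (e i)) 2}
  add_mem' hQ hR := hQ.add hR
  zero_mem' := zero_memℓp
  smul_mem' c _ hQ := hQ.const_smul c

def hsToLp : hsSubmodule H₁ e →ₗ[ℂ] lp (fun _ : ι => H₁) 2 where
  toFun Q := ⟨fun i => Q.1 (e i), Q.2⟩
  map_add' _ _ := rfl
  map_smul' _ _ := rfl

theorem hsToLp_injective : Function.Injective (hsToLp (H₁ := H₁) e) := by
  rw [← LinearMap.ker_eq_bot, LinearMap.ker_eq_bot']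
  intro Q hQ
  ext1
  refine ContinuousLinearMap.ext_on (s := Set.range e)
    (Submodule.dense_iff_topologicalClosure_eq_top.2 e.dense_span) ?_
  rintro _ ⟨i, rfl⟩
  exact congrArg (fun f : lp (fun _ : ι => H₁) 2 => f i) hQ

-- `hsSubmodule H₁ e` carries the operator norm; its Hilbert–Schmidt geometry is that of this
-- subspace of `ℓ²`.
def hsEquiv : hsSubmodule H₁ e ≃ₗ[ℂ] LinearMap.range (hsToLp (H₁ := H₁) e) :=
  LinearEquiv.ofInjective _ (hsToLp_injective e)

theorem norm_hsEquiv (Q : hsSubmodule H₁ e) : ‖hsEquiv e Q‖ = ‖hsToLp e Q‖ := rfl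

variable [CompleteSpace H₂]

theorem mem_hsSubmodule_iff {Q : H₂ →L[ℂ] H₁} : Q ∈ hsSubmodule H₁ e ↔ hsNorm2 e Q ≠ ⊤ := by
  change Memℓp _ 2 ↔ _
  rw [memℓp_gen_iff (by norm_num), ENNReal.toReal_ofNat, hsNorm2]
  simp_rw [Real.rpow_two, ← ENNReal.coe_pow, ENNReal.tsum_coe_ne_top_iff_summable,
    ← NNReal.summable_coe, NNReal.coe_pow, coe_nnnorm]

theorem inner_hsEquiv (Q R : hsSubmodule H₁ e) :
    ⟪hsEquiv e Q, hsEquiv e R⟫_ℂ = hsInner e (Q : H₂ →L[ℂ] H₁) (R : H₂ →L[ℂ] H₁) :=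
  lp.inner_eq_tsum _ _

theorem hsNorm2_eq_norm_hsToLp_sq (Q : hsSubmodule H₁ e) :
    hsNorm2 e (Q : H₂ →L[ℂ] H₁) = ENNReal.ofReal (‖hsToLp e Q‖ ^ 2) := by
  have h := lp.norm_rpow_eq_tsum (p := 2) (by norm_num) (hsToLp e Q)
  have hs := (lp.memℓp (hsToLp e Q)).summable (p := 2) (by norm_num)
  simp only [ENNReal.toReal_ofNat, Real.rpow_two] at h hs
  have hsq (x : H₁) : (‖x‖₊ : ℝ≥0∞) ^ 2 = ENNReal.ofReal (‖x‖ ^ 2) := by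
    rw [ENNReal.ofReal_pow (norm_nonneg _), ofReal_norm]; rfl
  rw [h, ENNReal.ofReal_tsum_of_nonneg (fun _ => by positivity) hs]
  simp_rw [hsNorm2, hsq]
  rfl

variable {e} in
theorem exists_tendsto_hsToLp_of_hsNorm2_sub {S : ℕ → hsSubmodule H₁ e} {A : H₂ →L[ℂ] H₁}
    (h : Tendsto (fun n => hsNorm2 e ((S n : H₂ →L[ℂ] H₁) - A)) atTop (𝓝 0)) :
    ∃ A' : hsSubmodule H₁ e, (A' : H₂ →L[ℂ] H₁) = A ∧
      Tendsto (fun n => hsToLp e (S n)) atTop (𝓝 (hsToLp e A')) := by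
  obtain ⟨n, hn⟩ := (h.eventually (gt_mem_nhds ENNReal.zero_lt_top)).exists
  have hA : A ∈ hsSubmodule H₁ e := by
    simpa using sub_mem (S n).2 ((mem_hsSubmodule_iff e).2 hn.ne)
  refine ⟨⟨A, hA⟩, rfl, tendsto_iff_norm_sub_tendsto_zero.2 ?_⟩
  have hnorm (m : ℕ) : ‖hsToLp e (S m) - hsToLp e ⟨A, hA⟩‖
      = √(hsNorm2 e ((S m : H₂ →L[ℂ] H₁) - A)).toReal := by
    rw [← map_sub, show (S m : H₂ →L[ℂ] H₁) - A = ↑(S m - ⟨A, hA⟩) from rfl,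
      hsNorm2_eq_norm_hsToLp_sq,
      ENNReal.toReal_ofReal (sq_nonneg _), Real.sqrt_sq (norm_nonneg _)]
  simp_rw [hnorm]
  simpa using ((ENNReal.tendsto_toReal ENNReal.zero_ne_top).comp h).sqrt

end HilbertSchmidt

section UniformApproximation

def roundDown (n : ℕ) (x : ℝ) : ℝ := ⌊x * (n + 1)⌋ / (n + 1)

@[fun_prop]
theorem measurable_roundDown (n : ℕ) : Measurable (roundDown n) := by
  unfold roundDown; fun_prop

theorem abs_roundDown_sub_le (n : ℕ) (x : ℝ) : |roundDown n x - x| ≤ 1 / (n + 1) := by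
  have hk : (0 : ℝ) < n + 1 := by positivity
  rw [roundDown, div_sub' hk.ne', abs_div, abs_of_pos hk, mul_comm, abs_sub_comm,
    Int.self_sub_floor, abs_of_nonneg (Int.fract_nonneg _)]
  exact div_le_div_of_nonneg_right (Int.fract_lt_one _).le hk.le

theorem finite_roundDown_image (n : ℕ) {t : Set ℝ} (hb : BddBelow t) (ha : BddAbove t) :
    (roundDown n '' t).Finite := by
  have hmono : Monotone fun x : ℝ => ⌊x * (n + 1)⌋ :=
    fun x y hxy => Int.floor_mono (mul_le_mul_of_nonneg_right hxy (by positivity))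
  change ((fun x : ℝ => (⌊x * (n + 1)⌋ : ℝ) / (n + 1)) '' t).Finite
  rw [← Set.image_image (fun m : ℤ => (m : ℝ) / (n + 1))]
  exact ((hmono.map_bddBelow hb).finite_of_bddAbove (hmono.map_bddAbove ha)).image _

def gridRound (n : ℕ) (z : ℂ) : ℂ := roundDown n z.re + roundDown n z.im * Complex.I

theorem norm_gridRound_sub_le (n : ℕ) (z : ℂ) : ‖gridRound n z - z‖ ≤ 2 / (n + 1) := by
  refine (Complex.norm_le_abs_re_add_abs_im _).trans ?_
  simp only [gridRound, Complex.sub_re, Complex.add_re, Complex.ofReal_re, Complex.mul_re,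
    Complex.I_re, mul_zero, Complex.ofReal_im, Complex.I_im, mul_one, sub_self, add_zero,
    Complex.sub_im, Complex.add_im, Complex.mul_im, zero_add]
  calc _ ≤ 1 / ((n : ℝ) + 1) + 1 / (n + 1) :=
        add_le_add (abs_roundDown_sub_le n z.re) (abs_roundDown_sub_le n z.im)
    _ = 2 / (n + 1) := by ring

theorem finite_gridRound_image (n : ℕ) {s : Set ℂ} (hs : IsBounded s) :
    (gridRound n '' s).Finite := by
  obtain ⟨R, hR⟩ := isBounded_iff_forall_norm_le.1 hs
  have hre : (Complex.re '' s) ⊆ Set.Icc (-R) R := by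
    rintro _ ⟨z, hz, rfl⟩; exact abs_le.1 ((Complex.abs_re_le_norm z).trans (hR z hz))
  have him : (Complex.im '' s) ⊆ Set.Icc (-R) R := by
    rintro _ ⟨z, hz, rfl⟩; exact abs_le.1 ((Complex.abs_im_le_norm z).trans (hR z hz))
  refine ((finite_roundDown_image n (bddBelow_Icc.mono hre) (bddAbove_Icc.mono hre)).image2
    (fun a b : ℝ => (a : ℂ) + b * Complex.I)
    (finite_roundDown_image n (bddBelow_Icc.mono him) (bddAbove_Icc.mono him))).subset ?_
  rintro _ ⟨z, hz, rfl⟩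
  exact Set.mem_image2_of_mem (Set.mem_image_of_mem _ (Set.mem_image_of_mem _ hz))
    (Set.mem_image_of_mem _ (Set.mem_image_of_mem _ hz))

theorem Measurable.exists_simpleFunc_tendstoUniformly {X : Type*} [MeasurableSpace X]
    {f : X → ℂ} (hf : Measurable f) (hb : IsBounded (Set.range f)) :
    ∃ s : ℕ → SimpleFunc X ℂ, TendstoUniformly (fun n x => s n x) f atTop := by
  have hround (n : ℕ) : Measurable (gridRound n) := by unfold gridRound; fun_prop
  refine ⟨fun n => ⟨gridRound n ∘ f, fun z => (hround n).comp hf (measurableSet_singleton z),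
    by rw [Set.range_comp]; exact finite_gridRound_image n hb⟩, ?_⟩
  rw [Metric.tendstoUniformly_iff]
  intro ε hε
  filter_upwards [((tendsto_one_div_add_atTop_nhds_zero_nat (𝕜 := ℝ)).const_mul 2).eventually
    (gt_mem_nhds (by simpa using hε))] with n hn x
  rw [dist_comm, dist_eq_norm]
  exact (norm_gridRound_sub_le n (f x)).trans_lt (by rwa [mul_one_div] at hn)

theorem TendstoUniformly.eventually_forall_norm_le_add {α X E : Type*} [SeminormedAddCommGroup E]
    {l : Filter α} {G : α → X → E} {f : X → E} (hG : TendstoUniformly G f l) {M : ℝ}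
    (hf : ∀ x, ‖f x‖ ≤ M) {ε : ℝ} (hε : 0 < ε) : ∀ᶠ a in l, ∀ x, ‖G a x‖ ≤ M + ε := by
  filter_upwards [Metric.tendstoUniformly_iff.1 hG ε hε] with a ha x
  refine (norm_le_norm_add_norm_sub' (G a x) (f x)).trans (add_le_add (hf x) ?_)
  rw [← dist_eq_norm, dist_comm]
  exact (ha x).le

end UniformApproximation

namespace IsProductSSM

variable {ι X₁ X₂ H₁ H₂ : Type*} [MeasurableSpace X₁] [MeasurableSpace X₂]
  [NormedAddCommGroup H₁] [InnerProductSpace ℂ H₁] [CompleteSpace H₁]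
  [NormedAddCommGroup H₂] [InnerProductSpace ℂ H₂] [CompleteSpace H₂]
  {e : HilbertBasis ι ℂ H₂} {ℰ₁ : Set X₁ → H₁ →L[ℂ] H₁} {ℰ₂ : Set X₂ → H₂ →L[ℂ] H₂}
  {F : Set (X₁ × X₂) → (H₂ →L[ℂ] H₁) → (H₂ →L[ℂ] H₁)} {Ω : Set (X₁ × X₂)}

theorem apply_mem_hsSubmodule (hF : IsProductSSM e ℰ₁ ℰ₂ F) (hΩ : MeasurableSet Ω)
    {Q : H₂ →L[ℂ] H₁} (hQ : Q ∈ hsSubmodule H₁ e) : F Ω Q ∈ hsSubmodule H₁ e := by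
  obtain ⟨-, hcontr, -⟩ := hF
  rw [mem_hsSubmodule_iff] at hQ ⊢
  exact ne_top_of_le_ne_top hQ (hcontr Ω hΩ Q hQ)

def hsOp (hF : IsProductSSM e ℰ₁ ℰ₂ F) (hΩ : MeasurableSet Ω) :
    hsSubmodule H₁ e →ₗ[ℂ] hsSubmodule H₁ e :=
  (hF.1 Ω hΩ).mk'.restrict fun _ hQ => hF.apply_mem_hsSubmodule hΩ hQ

theorem coe_hsOp_apply (hF : IsProductSSM e ℰ₁ ℰ₂ F) (hΩ : MeasurableSet Ω) (Q : hsSubmodule H₁ e) :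
    (hF.hsOp hΩ Q : H₂ →L[ℂ] H₁) = F Ω Q := rfl

theorem inner_conj_hsOp (hF : IsProductSSM e ℰ₁ ℰ₂ F) (hΩ : MeasurableSet Ω)
    (Q R : hsSubmodule H₁ e) :
    ⟪(hsEquiv e).conj (hF.hsOp hΩ) (hsEquiv e Q), hsEquiv e R⟫_ℂ
      = hsInner e (F Ω Q) (R : H₂ →L[ℂ] H₁) := by
  rw [LinearEquiv.conj_apply_apply, LinearEquiv.symm_apply_apply, inner_hsEquiv, coe_hsOp_apply]

theorem isPositive_conj_hsOp (hF : IsProductSSM e ℰ₁ ℰ₂ F) (hΩ : MeasurableSet Ω) :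
    ((hsEquiv e).conj (hF.hsOp hΩ)).IsPositive := by
  refine (LinearMap.isPositive_iff_complex _).2 fun v => ?_
  obtain ⟨Q, rfl⟩ := (hsEquiv e).surjective v
  obtain ⟨-, -, -, hpos, -⟩ := id hF
  obtain ⟨hre, him⟩ := hpos Ω hΩ Q ((mem_hsSubmodule_iff e).1 Q.2)
  rw [inner_conj_hsOp]
  exact ⟨Complex.ext rfl (by simpa using him.symm), hre⟩

theorem sum_conj_hsOp_fiber (hF : IsProductSSM e ℰ₁ ℰ₂ F) (s : SimpleFunc (X₁ × X₂) ℂ) :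
    ∑ z ∈ s.range, (hsEquiv e).conj (hF.hsOp (s.measurableSet_fiber z)) = 1 := by
  obtain ⟨-, -, -, -, hempty, huniv, hadd⟩ := id hF
  ext1 v
  obtain ⟨Q, rfl⟩ := (hsEquiv e).surjective v
  refine ext_inner_right ℂ fun w => ?_
  obtain ⟨R, rfl⟩ := (hsEquiv e).surjective w
  have hQ := (mem_hsSubmodule_iff e).1 Q.2
  have hR := (mem_hsSubmodule_iff e).1 R.2
  rw [LinearMap.sum_apply, sum_inner, Module.End.one_apply, inner_hsEquiv]
  simp_rw [inner_conj_hsOp]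
  rw [s.sum_range_fiber_eq_univ_of_tendsto_sum (m := fun Ω => hsInner e (F Ω Q) (R : H₂ →L[ℂ] H₁))
    (by simp [hempty, hsInner]) fun Ω hΩ hdisj => hadd Ω hΩ hdisj Q R hQ hR, huniv Q hQ]

theorem norm_hsToLp_sum_smul_hsOp_le (hF : IsProductSSM e ℰ₁ ℰ₂ F) (s : SimpleFunc (X₁ × X₂) ℂ)
    {B : ℝ} (hB0 : 0 ≤ B) (hB : ∀ z ∈ s.range, ‖z‖ ≤ B) (Q : hsSubmodule H₁ e) :
    ‖hsToLp e (∑ z ∈ s.range, z • hF.hsOp (s.measurableSet_fiber z) Q)‖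
      ≤ B * ‖hsToLp e Q‖ := by
  rw [← norm_hsEquiv, ← norm_hsEquiv]
  have h := LinearMap.norm_sum_smul_apply_le_of_isPositive
    (fun z => hF.isPositive_conj_hsOp (s.measurableSet_fiber z)) (hF.sum_conj_hsOp_fiber s) hB0 hB
    (hsEquiv e Q)
  simpa only [map_sum, map_smul, LinearEquiv.conj_apply_apply, LinearEquiv.symm_apply_apply]
    using h

theorem norm_hsToLp_le_of_tendsto (hF : IsProductSSM e ℰ₁ ℰ₂ F) {Φ : X₁ × X₂ → ℂ} {M : ℝ}
    (hM : 0 ≤ M) (hΦ : ∀ p, ‖Φ p‖ ≤ M) {s : ℕ → SimpleFunc (X₁ × X₂) ℂ}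
    (hs : TendstoUniformly (fun n p => s n p) Φ atTop) {Q A : hsSubmodule H₁ e}
    (hA : Tendsto
      (fun n => hsToLp e (∑ z ∈ (s n).range, z • hF.hsOp ((s n).measurableSet_fiber z) Q))
      atTop (𝓝 (hsToLp e A))) :
    ‖hsToLp e A‖ ≤ M * ‖hsToLp e Q‖ := by
  have hε (ε : ℝ) (hε : 0 < ε) : ‖hsToLp e A‖ ≤ (M + ε) * ‖hsToLp e Q‖ := by
    refine le_of_tendsto hA.norm ((hs.eventually_forall_norm_le_add hΦ hε).mono fun n hn => ?_)
    refine hF.norm_hsToLp_sum_smul_hsOp_le (s n) (by positivity) (fun z hz => ?_) Q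
    obtain ⟨p, rfl⟩ := SimpleFunc.mem_range.1 hz
    exact hn p
  have hlim : Tendsto (fun ε => (M + ε) * ‖hsToLp e Q‖) (𝓝[>] 0) (𝓝 (M * ‖hsToLp e Q‖)) :=
    tendsto_nhdsWithin_of_tendsto_nhds ((by fun_prop : Continuous fun ε : ℝ =>
      (M + ε) * ‖hsToLp e Q‖).tendsto' 0 _ (by rw [add_zero]))
  exact ge_of_tendsto hlim (eventually_nhdsWithin_of_forall hε)

end IsProductSSM

theorem statement5_general {ι X₁ X₂ : Type*} [MeasurableSpace X₁] [MeasurableSpace X₂]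
    {H₁ H₂ : Type*}
    [NormedAddCommGroup H₁] [InnerProductSpace ℂ H₁] [CompleteSpace H₁]
    [NormedAddCommGroup H₂] [InnerProductSpace ℂ H₂] [CompleteSpace H₂]
    (e : HilbertBasis ι ℂ H₂)
    (ℰ₁ : Set X₁ → H₁ →L[ℂ] H₁)
    (ℰ₂ : Set X₂ → H₂ →L[ℂ] H₂)
    (Φ : X₁ × X₂ → ℂ) (hΦm : Measurable Φ) (C : ℝ) (hΦb : ∀ p, ‖Φ p‖ ≤ C)
    (Q : H₂ →L[ℂ] H₁) (hQ : hsNorm2 e Q ≠ ⊤)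
    (A : H₂ →L[ℂ] H₁) (hA : IsDOI e ℰ₁ ℰ₂ Φ Q A) :
    hsNorm2 e A ≤ (⨆ p : X₁ × X₂, (‖Φ p‖₊ : ℝ≥0∞)) ^ 2 * hsNorm2 e Q := by
  obtain ⟨F, hF, hlim⟩ := hA
  set M := ⨆ p : X₁ × X₂, (‖Φ p‖₊ : ℝ≥0∞)
  have hM : M ≠ ⊤ := ne_top_of_le_ne_top ENNReal.ofReal_ne_top <| iSup_le fun p =>
    (ofReal_norm (Φ p)).symm.trans_le (ENNReal.ofReal_le_ofReal (hΦb p))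
  have hΦM (p : X₁ × X₂) : ‖Φ p‖ ≤ M.toReal := by
    simpa using ENNReal.toReal_mono hM (le_iSup (fun p => (‖Φ p‖₊ : ℝ≥0∞)) p)
  obtain ⟨s, hs⟩ := hΦm.exists_simpleFunc_tendstoUniformly
    (isBounded_iff_forall_norm_le.2 ⟨C, Set.forall_mem_range.2 hΦb⟩)
  let Q' : hsSubmodule H₁ e := ⟨Q, (mem_hsSubmodule_iff e).2 hQ⟩
  obtain ⟨A', rfl, hA'⟩ := exists_tendsto_hsToLp_of_hsNorm2_sub
    (S := fun n => ∑ z ∈ (s n).range, z • hF.hsOp ((s n).measurableSet_fiber z) Q')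
    (by simpa [Submodule.coe_sum, hF.coe_hsOp_apply] using hlim s hs)
  have hbound := hF.norm_hsToLp_le_of_tendsto ENNReal.toReal_nonneg hΦM hs hA'
  rw [hsNorm2_eq_norm_hsToLp_sq, show Q = Q' from rfl, hsNorm2_eq_norm_hsToLp_sq]
  calc ENNReal.ofReal (‖hsToLp e A'‖ ^ 2)
      ≤ ENNReal.ofReal ((M.toReal * ‖hsToLp e Q'‖) ^ 2) :=
        ENNReal.ofReal_le_ofReal (pow_le_pow_left₀ (norm_nonneg _) hbound 2)
    _ = M ^ 2 * ENNReal.ofReal (‖hsToLp e Q'‖ ^ 2) := by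
        rw [mul_pow, ENNReal.ofReal_mul (by positivity), ENNReal.ofReal_pow ENNReal.toReal_nonneg,
          ENNReal.ofReal_toReal hM]

/-- The double operator integral with respect to semi-spectral measures
of a Hilbert–Schmidt operator satisfies
`‖∬ Φ dℰ₁ Q dℰ₂‖_{S₂} ≤ sup |Φ| ⬝ ‖Q‖_{S₂}` (stated with squared `S₂`-norms). -/
theorem statement5 {ι X₁ X₂ : Type*} [MeasurableSpace X₁] [MeasurableSpace X₂]
    {H₁ H₂ : Type*}
    [NormedAddCommGroup H₁] [InnerProductSpace ℂ H₁] [CompleteSpace H₁]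
    [NormedAddCommGroup H₂] [InnerProductSpace ℂ H₂] [CompleteSpace H₂]
    (e : HilbertBasis ι ℂ H₂)
    (ℰ₁ : Set X₁ → H₁ →L[ℂ] H₁) (hℰ₁ : IsSemiSpectralMeasure ℰ₁)
    (ℰ₂ : Set X₂ → H₂ →L[ℂ] H₂) (hℰ₂ : IsSemiSpectralMeasure ℰ₂)
    (Φ : X₁ × X₂ → ℂ) (hΦm : Measurable Φ) (C : ℝ) (hΦb : ∀ p, ‖Φ p‖ ≤ C)
    (Q : H₂ →L[ℂ] H₁) (hQ : hsNorm2 e Q ≠ ⊤)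
    (A : H₂ →L[ℂ] H₁) (hA : IsDOI e ℰ₁ ℰ₂ Φ Q A) :
    hsNorm2 e A ≤ (⨆ p : X₁ × X₂, (‖Φ p‖₊ : ℝ≥0∞)) ^ 2 * hsNorm2 e Q :=
  statement5_general e ℰ₁ ℰ₂ Φ hΦm C hΦb Q hQ A hA

end
end
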